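/- Let A₁, …, A_m be n×n real matrices such that each A_i is block upper triangular with a common block structure: A_i has a k×k upper-left diagonal block A_{i,1} (with 1 ≤ k < n), an (n−k)×(n−k) lower-right diagonal block A_{i,2}, a k×(n−k) upper-right block, and a zero lower-left block. Then ρ({A₁, …, A_m}) = max( ρ({A_{1,1}, …, A_{m,1}}), ρ({A_{1,2}, …, A_{m,2}}) ), i.e. the joint spectral radius of the set of block upper triangular matrices equals the maximum of the joint spectral radii of the sets of corresponding diagonal blocks. -/

import Mathlib

/-- Spectral radius of a real square matrix: the largest absolute value of its
complex eigenvalues (elements of the spectrum of the complexified matrix). -/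
noncomputable def specRad {n : ℕ} (A : Matrix (Fin n) (Fin n) ℝ) : ℝ :=
  sSup {r : ℝ | ∃ μ ∈ spectrum ℂ (A.map Complex.ofReal), r = ‖μ‖}

/-- The set 𝒜^j of all products A₁A₂⋯A_j of j matrices from 𝒜. -/
def prodSet {n : ℕ} (𝒜 : Set (Matrix (Fin n) (Fin n) ℝ)) (j : ℕ) :
    Set (Matrix (Fin n) (Fin n) ℝ) :=
  {A | ∃ f : Fin j → Matrix (Fin n) (Fin n) ℝ, (∀ i, f i ∈ 𝒜) ∧ A = (List.ofFn f).prod}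

/-- Joint spectral radius: ρ(𝒜) = limsup_{j→∞} (sup_{A ∈ 𝒜^j} ρ(A))^{1/j}. -/
noncomputable def jsr {n : ℕ} (𝒜 : Set (Matrix (Fin n) (Fin n) ℝ)) : ℝ :=
  Filter.limsup
    (fun j : ℕ => (sSup (specRad '' prodSet 𝒜 j)) ^ ((1 : ℝ) / j)) Filter.atTop

/-! A product of block upper triangular matrices is block upper triangular, with the products
of the diagonal blocks on its diagonal, and the characteristic polynomial of such a matrix is the
product of those of its diagonal blocks. Hence `ρ(A_w) = max (ρ(A_{w,1}), ρ(A_{w,2}))` for every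
word `w`. Taking the supremum over words of length `j`, then the `j`-th root, commutes with `max`,
and so does `limsup` for sequences that are bounded, which ours are because `ρ` is dominated by
any submultiplicative norm. -/

open Matrix Filter

namespace Matrix

variable {l m n R : Type*} [Fintype l] [Fintype m] [DecidableEq l] [DecidableEq m]

theorem list_ofFn_prod_fromBlocks_zero₂₁ [Semiring R] {j : ℕ} (B : Fin j → Matrix l l R)
    (C : Fin j → Matrix l m R) (D : Fin j → Matrix m m R) :
    ∃ C' : Matrix l m R, (List.ofFn fun i => fromBlocks (B i) (C i) 0 (D i)).prod =
      fromBlocks (List.ofFn B).prod C' 0 (List.ofFn D).prod := by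
  induction j with
  | zero => exact ⟨0, by simp [fromBlocks_one]⟩
  | succ j ih =>
    obtain ⟨C', hC'⟩ := ih (fun i => B i.succ) (fun i => C i.succ) (fun i => D i.succ)
    refine ⟨B 0 * C' + C 0 * (List.ofFn fun i => D i.succ).prod, ?_⟩
    simp [List.ofFn_succ, hC', fromBlocks_multiply]

theorem spectrum_fromBlocks_zero₂₁ [Field R] (B : Matrix l l R) (C : Matrix l m R)
    (D : Matrix m m R) : spectrum R (fromBlocks B C 0 D) = spectrum R B ∪ spectrum R D := by
  ext μ
  simp [mem_spectrum_iff_isRoot_charpoly, charpoly_fromBlocks_zero₂₁]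

theorem spectrum_reindex [CommRing R] [Fintype n] [DecidableEq n] (e : m ≃ n)
    (M : Matrix m m R) : spectrum R (reindex e e M) = spectrum R M := by
  rw [← coe_reindexAlgEquiv R R e, AlgEquiv.spectrum_eq]

end Matrix

theorem Real.sSup_union_of_nonneg {s t : Set ℝ} (hs : BddAbove s) (ht : BddAbove t)
    (hs₀ : ∀ x ∈ s, 0 ≤ x) (ht₀ : ∀ x ∈ t, 0 ≤ x) : sSup (s ∪ t) = max (sSup s) (sSup t) := by
  rcases s.eq_empty_or_nonempty with rfl | hs'
  · simp [Real.sSup_nonneg ht₀]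
  rcases t.eq_empty_or_nonempty with rfl | ht'
  · simp [Real.sSup_nonneg hs₀]
  exact csSup_union hs hs' ht ht'

section SpecRad

variable {n : ℕ}

theorem specRad_eq_sSup_image_norm (M : Matrix (Fin n) (Fin n) ℝ) :
    specRad M = sSup (norm '' spectrum ℂ (M.map Complex.ofReal)) := by
  simp only [specRad, Set.image, eq_comm]

theorem specRad_nonneg (M : Matrix (Fin n) (Fin n) ℝ) : 0 ≤ specRad M :=
  Real.sSup_nonneg <| by rintro _ ⟨μ, -, rfl⟩; exact norm_nonneg μ

theorem specRad_reindex_fromBlocks {k l : ℕ} (e : Fin k ⊕ Fin l ≃ Fin n)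
    (B : Matrix (Fin k) (Fin k) ℝ) (C : Matrix (Fin k) (Fin l) ℝ) (D : Matrix (Fin l) (Fin l) ℝ) :
    specRad (reindex e e (fromBlocks B C 0 D)) = max (specRad B) (specRad D) := by
  simp only [specRad_eq_sSup_image_norm, reindex_apply, ← submatrix_map, fromBlocks_map,
    Matrix.map_zero _ Complex.ofReal_zero]
  rw [← reindex_apply, spectrum_reindex, spectrum_fromBlocks_zero₂₁, Set.image_union]
  refine Real.sSup_union_of_nonneg ((finite_spectrum _).image _).bddAbove
    ((finite_spectrum _).image _).bddAbove ?_ ?_ <;>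
  · rintro _ ⟨μ, -, rfl⟩; exact norm_nonneg μ

end SpecRad

section SupSpecRad

variable {n : ℕ}

noncomputable def supSpecRad (𝒜 : Set (Matrix (Fin n) (Fin n) ℝ)) (j : ℕ) : ℝ :=
  sSup (specRad '' prodSet 𝒜 j)

theorem jsr_eq_limsup_supSpecRad (𝒜 : Set (Matrix (Fin n) (Fin n) ℝ)) :
    jsr 𝒜 = limsup (fun j : ℕ => supSpecRad 𝒜 j ^ ((1 : ℝ) / j)) atTop :=
  rfl

theorem prodSet_range {ι : Type*} (A : ι → Matrix (Fin n) (Fin n) ℝ) (j : ℕ) :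
    prodSet (Set.range A) j = Set.range fun w : Fin j → ι => (List.ofFn (A ∘ w)).prod := by
  ext M
  constructor
  · rintro ⟨f, hf, rfl⟩
    choose w hw using hf
    exact ⟨w, congrArg (fun g => (List.ofFn g).prod) (funext hw)⟩
  · rintro ⟨w, rfl⟩
    exact ⟨A ∘ w, fun i => ⟨w i, rfl⟩, rfl⟩

theorem supSpecRad_nonneg (𝒜 : Set (Matrix (Fin n) (Fin n) ℝ)) (j : ℕ) : 0 ≤ supSpecRad 𝒜 j :=
  Real.sSup_nonneg <| by rintro _ ⟨M, -, rfl⟩; exact specRad_nonneg M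

theorem isCoboundedUnder_le_supSpecRad_rpow (𝒜 : Set (Matrix (Fin n) (Fin n) ℝ)) :
    IsCoboundedUnder (· ≤ ·) atTop
      (fun j : ℕ => supSpecRad 𝒜 j ^ ((1 : ℝ) / j)) :=
  (isBoundedUnder_of ⟨0, fun j => Real.rpow_nonneg (supSpecRad_nonneg 𝒜 j) _⟩
    ).isCoboundedUnder_le

end SupSpecRad

section LinftyOpNorm

attribute [local instance] Matrix.linftyOpNormedRing Matrix.linftyOpNormedAlgebra

variable {n : ℕ}

theorem specRad_le_norm (M : Matrix (Fin n) (Fin n) ℝ) : specRad M ≤ ‖M.map Complex.ofReal‖ := by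
  refine Real.sSup_le ?_ (norm_nonneg _)
  rintro _ ⟨μ, hμ, rfl⟩
  -- `NormOneClass` needs a nonempty index type; a `0 × 0` matrix has empty spectrum.
  have : Nonempty (Fin n) := by
    by_contra h
    rw [not_nonempty_iff] at h
    simp [spectrum.of_subsingleton] at hμ
  exact spectrum.norm_le_norm_of_mem hμ

theorem specRad_list_prod_le {l : List (Matrix (Fin n) (Fin n) ℝ)} (hl : l ≠ []) {C : NNReal}
    (hC : ∀ M ∈ l, ‖M.map Complex.ofReal‖₊ ≤ C) : specRad l.prod ≤ C ^ l.length := by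
  have hmap : l.prod.map Complex.ofReal = (l.map (Matrix.map · Complex.ofReal)).prod :=
    map_list_prod (Complex.ofRealHom.mapMatrix (m := Fin n)) l
  refine (specRad_le_norm _).trans ?_
  rw [← coe_nnnorm, hmap, ← NNReal.coe_pow, NNReal.coe_le_coe]
  refine (List.nnnorm_prod_le' (by simpa using hl)).trans ?_
  refine (List.prod_le_pow_card _ C ?_).trans_eq (by simp)
  simpa using hC

theorem supSpecRad_le_pow {𝒜 : Set (Matrix (Fin n) (Fin n) ℝ)} {C : NNReal}
    (hC : ∀ M ∈ 𝒜, ‖M.map Complex.ofReal‖₊ ≤ C) {j : ℕ} (hj : j ≠ 0) :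
    supSpecRad 𝒜 j ≤ C ^ j := by
  refine Real.sSup_le ?_ (by positivity)
  rintro _ ⟨_, ⟨f, hf, rfl⟩, rfl⟩
  simpa using specRad_list_prod_le (l := List.ofFn f) (by simpa using hj) (C := C)
    (by simpa using fun i => hC _ (hf i))

theorem isBoundedUnder_le_supSpecRad_rpow {𝒜 : Set (Matrix (Fin n) (Fin n) ℝ)} (h𝒜 : 𝒜.Finite) :
    IsBoundedUnder (· ≤ ·) atTop
      (fun j : ℕ => supSpecRad 𝒜 j ^ ((1 : ℝ) / j)) := by
  obtain ⟨C, hC⟩ := (h𝒜.image fun M => ‖M.map Complex.ofReal‖₊).bddAbove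
  refine isBoundedUnder_of_eventually_le (a := C) ?_
  filter_upwards [eventually_ne_atTop 0] with j hj
  calc supSpecRad 𝒜 j ^ ((1 : ℝ) / j)
      ≤ ((C : ℝ) ^ j) ^ ((1 : ℝ) / j) := by
        gcongr
        · exact supSpecRad_nonneg 𝒜 j
        · exact supSpecRad_le_pow (fun M hM => hC ⟨M, hM, rfl⟩) hj
    _ = C := by rw [one_div, Real.pow_rpow_inv_natCast C.coe_nonneg hj]

end LinftyOpNorm

theorem jsr_eq_max_of_supSpecRad_eq_max {n k l : ℕ} {𝒜 : Set (Matrix (Fin n) (Fin n) ℝ)}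
    {ℬ : Set (Matrix (Fin k) (Fin k) ℝ)} {𝒞 : Set (Matrix (Fin l) (Fin l) ℝ)}
    (hℬ : ℬ.Finite) (h𝒞 : 𝒞.Finite)
    (h : ∀ j, supSpecRad 𝒜 j = max (supSpecRad ℬ j) (supSpecRad 𝒞 j)) :
    jsr 𝒜 = max (jsr ℬ) (jsr 𝒞) := by
  have hmax (j : ℕ) : max (supSpecRad ℬ j) (supSpecRad 𝒞 j) ^ ((1 : ℝ) / j) =
      max (supSpecRad ℬ j ^ ((1 : ℝ) / j)) (supSpecRad 𝒞 j ^ ((1 : ℝ) / j)) :=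
    Real.rpow_max (supSpecRad_nonneg ℬ j) (supSpecRad_nonneg 𝒞 j) (by positivity)
  simp only [jsr_eq_limsup_supSpecRad, h, hmax]
  exact limsup_max (isCoboundedUnder_le_supSpecRad_rpow ℬ)
    (isCoboundedUnder_le_supSpecRad_rpow 𝒞) (isBoundedUnder_le_supSpecRad_rpow hℬ)
    (isBoundedUnder_le_supSpecRad_rpow h𝒞)

section BlockTriangular

variable {n k l : ℕ} (e : Fin k ⊕ Fin l ≃ Fin n)

theorem specRad_list_ofFn_prod_reindex_fromBlocks {j : ℕ} (B : Fin j → Matrix (Fin k) (Fin k) ℝ)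
    (C : Fin j → Matrix (Fin k) (Fin l) ℝ) (D : Fin j → Matrix (Fin l) (Fin l) ℝ) :
    specRad (List.ofFn fun i => reindex e e (fromBlocks (B i) (C i) 0 (D i))).prod =
      max (specRad (List.ofFn B).prod) (specRad (List.ofFn D).prod) := by
  obtain ⟨C', hC'⟩ := list_ofFn_prod_fromBlocks_zero₂₁ B C D
  have hreindex := map_list_prod (reindexRingEquiv ℝ e)
    (List.ofFn fun i => fromBlocks (B i) (C i) 0 (D i))
  simp only [List.map_ofFn, coe_reindexRingEquiv, Function.comp_def, hC'] at hreindex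
  rw [← hreindex, specRad_reindex_fromBlocks]

theorem supSpecRad_range_reindex_fromBlocks {ι : Type*} [Finite ι]
    (B : ι → Matrix (Fin k) (Fin k) ℝ) (C : ι → Matrix (Fin k) (Fin l) ℝ)
    (D : ι → Matrix (Fin l) (Fin l) ℝ) (j : ℕ) :
    supSpecRad (Set.range fun i => reindex e e (fromBlocks (B i) (C i) 0 (D i))) j =
      max (supSpecRad (Set.range B) j) (supSpecRad (Set.range D) j) := by
  simp only [supSpecRad, prodSet_range, ← Set.range_comp, Function.comp_def,
    specRad_list_ofFn_prod_reindex_fromBlocks]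
  exact ciSup_sup_eq (Set.finite_range _).bddAbove (Set.finite_range _).bddAbove

end BlockTriangular

theorem jsr_blockTriangular_general {n k m : ℕ} (hkn : k < n)
    (A : Fin m → Matrix (Fin n) (Fin n) ℝ)
    (A₁ : Fin m → Matrix (Fin k) (Fin k) ℝ)
    (A₂ : Fin m → Matrix (Fin (n - k)) (Fin (n - k)) ℝ)
    (A₀ : Fin m → Matrix (Fin k) (Fin (n - k)) ℝ)
    (hA : ∀ i, A i =
      Matrix.reindex (finSumFinEquiv.trans (finCongr (Nat.add_sub_cancel' hkn.le)))
        (finSumFinEquiv.trans (finCongr (Nat.add_sub_cancel' hkn.le)))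
        (Matrix.fromBlocks (A₁ i) (A₀ i) 0 (A₂ i))) :
    jsr (Set.range A) = max (jsr (Set.range A₁)) (jsr (Set.range A₂)) := by
  obtain rfl := funext hA
  exact jsr_eq_max_of_supSpecRad_eq_max (Set.finite_range A₁) (Set.finite_range A₂)
    (supSpecRad_range_reindex_fromBlocks _ A₁ A₀ A₂)

/-- The JSR of a family of block upper triangular matrices with a common block
structure equals the maximum of the JSRs of the families of diagonal blocks. -/
theorem jsr_blockTriangular {n k m : ℕ} (hm : 0 < m) (hk1 : 1 ≤ k) (hkn : k < n)
    (A : Fin m → Matrix (Fin n) (Fin n) ℝ)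
    (A₁ : Fin m → Matrix (Fin k) (Fin k) ℝ)
    (A₂ : Fin m → Matrix (Fin (n - k)) (Fin (n - k)) ℝ)
    (A₀ : Fin m → Matrix (Fin k) (Fin (n - k)) ℝ)
    (hA : ∀ i, A i =
      Matrix.reindex (finSumFinEquiv.trans (finCongr (Nat.add_sub_cancel' hkn.le)))
        (finSumFinEquiv.trans (finCongr (Nat.add_sub_cancel' hkn.le)))
        (Matrix.fromBlocks (A₁ i) (A₀ i) 0 (A₂ i))) :
    jsr (Set.range A) = max (jsr (Set.range A₁)) (jsr (Set.range A₂)) :=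
  jsr_blockTriangular_general hkn A A₁ A₂ A₀ hA
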